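/- arXiv:1405.4028 — 6 statements merged into one kernel-verified Lean document; each statement's English description precedes it below -/
import Mathlib

section
/- Loos–Weispfenning quantifier elimination for linear rational arithmetic (equation (1) of the paper, stated semantically): (∃ x : ℝ, F x) holds if and only if (∃ e ∈ E, F e) ∨ (∃ ℓ ∈ L, G ∅ {ℓ' ∈ L | ℓ' ≤ ℓ} {u ∈ U | ℓ < u}) ∨ G ∅ ∅ ↑U. Here the three disjunct families are the virtual substitutions λ_m[e], λ_m[ℓ+ε], and λ_m[−∞], respectively. -/
/-- Loos–Weispfenning quantifier elimination for LRA, stated semantically. -/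
theorem lw_qe_lra
    (E L U : Finset ℝ)
    (G : Set ℝ → Set ℝ → Set ℝ → Prop)
    (hG : ∀ ⦃A A' B B' C C' : Set ℝ⦄,
      A ⊆ A' → B ⊆ B' → C ⊆ C' → G A B C → G A' B' C')
    (F : ℝ → Prop)
    (hF : ∀ x : ℝ, F x ↔
      G {e : ℝ | e ∈ E ∧ x = e} {ℓ : ℝ | ℓ ∈ L ∧ ℓ < x} {u : ℝ | u ∈ U ∧ x < u}) :
    (∃ x : ℝ, F x) ↔
      (∃ e ∈ E, F e) ∨
      (∃ ℓ ∈ L, G ∅ {ℓ' : ℝ | ℓ' ∈ L ∧ ℓ' ≤ ℓ} {u : ℝ | u ∈ U ∧ ℓ < u}) ∨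
      G ∅ ∅ (↑U : Set ℝ) := by
  constructor
  · rintro ⟨x, hx⟩
    by_cases hxE : x ∈ E
    · exact Or.inl ⟨x, hxE, hx⟩
    have hA : {e : ℝ | e ∈ E ∧ x = e} = (∅ : Set ℝ) := by
      ext e; simp only [Set.mem_setOf_eq, Set.mem_empty_iff_false, iff_false]
      rintro ⟨he, rfl⟩; exact hxE he
    have hGx := (hF x).mp hx
    rw [hA] at hGx
    by_cases hL : (L.filter (· < x)).Nonempty
    · refine Or.inr (Or.inl ?_)
      have hℓmem := Finset.mem_filter.mp ((L.filter (· < x)).max'_mem hL)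
      refine ⟨(L.filter (· < x)).max' hL, hℓmem.1, ?_⟩
      refine hG (subset_refl _) ?_ ?_ hGx
      · rintro ℓ' ⟨h1, h2⟩
        exact ⟨h1, (L.filter (· < x)).le_max' ℓ' (Finset.mem_filter.mpr ⟨h1, h2⟩)⟩
      · rintro u ⟨h1, h2⟩
        exact ⟨h1, lt_trans hℓmem.2 h2⟩
    · refine Or.inr (Or.inr ?_)
      refine hG (subset_refl _) ?_ ?_ hGx
      · rintro ℓ ⟨h1, h2⟩
        exact absurd ⟨ℓ, Finset.mem_filter.mpr ⟨h1, h2⟩⟩ hL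
      · rintro u ⟨h1, _⟩; exact h1
  · rintro (⟨e, heE, he⟩ | ⟨ℓ, hℓL, hGℓ⟩ | hGU)
    · exact ⟨e, he⟩
    · -- pick x slightly above ℓ
      set S := U.filter (ℓ < ·) with hS
      by_cases hSne : S.Nonempty
      · set x := (ℓ + S.min' hSne) / 2 with hx
        have hℓlt : ℓ < S.min' hSne := by
          have := S.min'_mem hSne
          simp only [hS, Finset.mem_filter] at this
          exact this.2
        have h1 : ℓ < x := by rw [hx]; linarith
        have h2 : ∀ u ∈ U, ℓ < u → x < u := by
          intro u hu hℓu
          have : S.min' hSne ≤ u := S.min'_le u (Finset.mem_filter.mpr ⟨hu, hℓu⟩)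
          rw [hx]; linarith
        refine ⟨x, (hF x).mpr ?_⟩
        refine hG (Set.empty_subset _) ?_ ?_ hGℓ
        · rintro ℓ' ⟨ha, hb⟩; exact ⟨ha, lt_of_le_of_lt hb h1⟩
        · rintro u ⟨ha, hb⟩; exact ⟨ha, h2 u ha hb⟩
      · refine ⟨ℓ + 1, (hF (ℓ + 1)).mpr ?_⟩
        refine hG (Set.empty_subset _) ?_ ?_ hGℓ
        · rintro ℓ' ⟨ha, hb⟩; exact ⟨ha, by linarith⟩
        · rintro u ⟨ha, hb⟩
          exact absurd ⟨u, Finset.mem_filter.mpr ⟨ha, hb⟩⟩ hSne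
    · by_cases hU : U.Nonempty
      · set x := U.min' hU - 1 with hx
        refine ⟨x, (hF x).mpr ?_⟩
        refine hG (Set.empty_subset _) (Set.empty_subset _) ?_ hGU
        intro u hu
        have : U.min' hU ≤ u := U.min'_le u hu
        exact ⟨hu, by rw [hx]; linarith⟩
      · refine ⟨0, (hF 0).mpr ?_⟩
        refine hG (Set.empty_subset _) (Set.empty_subset _) ?_ hGU
        intro u hu
        exact absurd ⟨u, hu⟩ hU
end

section
/- Under-approximation property of the Loos–Weispfenning disjuncts (part of Theorem 4): each disjunct of the LW decomposition implies the existential formula. Namely: (i) for every ℓ ∈ L, if G ∅ {ℓ' ∈ L | ℓ' ≤ ℓ} {u ∈ U | ℓ < u} holds then ∃ x : ℝ, F x; and (ii) if G ∅ ∅ ↑U holds then ∃ x : ℝ, F x. -/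
/-- There is a point strictly above `ℓ` and strictly below every element of a
finite set that is above `ℓ`. -/
lemma exists_between_aux (ℓ : ℝ) (U : Finset ℝ) :
    ∃ x : ℝ, ℓ < x ∧ ∀ u ∈ U, ℓ < u → x < u := by
  classical
  set S := U.filter (fun u => ℓ < u) with hS
  by_cases h : S.Nonempty
  · refine ⟨(ℓ + S.min' h) / 2, ?_, ?_⟩
    · have : ℓ < S.min' h := (Finset.mem_filter.mp (S.min'_mem h)).2
      linarith
    · intro u hu hℓu
      have huS : u ∈ S := Finset.mem_filter.mpr ⟨hu, hℓu⟩
      have h1 : S.min' h ≤ u := S.min'_le u huS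
      have h2 : ℓ < S.min' h := (Finset.mem_filter.mp (S.min'_mem h)).2
      linarith
  · refine ⟨ℓ + 1, by linarith, ?_⟩
    intro u hu hℓu
    exact absurd ⟨u, Finset.mem_filter.mpr ⟨hu, hℓu⟩⟩ h

/-- Under-approximation property of the Loos–Weispfenning disjuncts:
each disjunct of the LW decomposition implies the existential formula. -/
theorem lw_disjuncts_underapproximate
    (E L U : Finset ℝ)
    (G : Set ℝ → Set ℝ → Set ℝ → Prop)
    (hG : ∀ ⦃A A' B B' C C' : Set ℝ⦄,
      A ⊆ A' → B ⊆ B' → C ⊆ C' → G A B C → G A' B' C')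
    (F : ℝ → Prop)
    (hF : ∀ x : ℝ, F x ↔
      G {e : ℝ | e ∈ E ∧ x = e} {ℓ : ℝ | ℓ ∈ L ∧ ℓ < x} {u : ℝ | u ∈ U ∧ x < u}) :
    (∀ ℓ ∈ L, G ∅ {ℓ' : ℝ | ℓ' ∈ L ∧ ℓ' ≤ ℓ} {u : ℝ | u ∈ U ∧ ℓ < u} →
      ∃ x : ℝ, F x) ∧
    (G ∅ ∅ (↑U : Set ℝ) → ∃ x : ℝ, F x) := by
  classical
  constructor
  · intro ℓ hℓ hGd
    obtain ⟨x, hx1, hx2⟩ := exists_between_aux ℓ U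
    refine ⟨x, (hF x).mpr ?_⟩
    refine hG (Set.empty_subset _) ?_ ?_ hGd
    · intro ℓ' ⟨h1, h2⟩; exact ⟨h1, lt_of_le_of_lt h2 hx1⟩
    · intro u ⟨h1, h2⟩; exact ⟨h1, hx2 u h1 h2⟩
  · intro hGd
    obtain ⟨x, hx⟩ : ∃ x : ℝ, ∀ u ∈ U, x < u := by
      by_cases h : U.Nonempty
      · exact ⟨U.min' h - 1, fun u hu => by
          have := U.min'_le u hu; linarith⟩
      · exact ⟨0, fun u hu => absurd ⟨u, hu⟩ h⟩
    refine ⟨x, (hF x).mpr ?_⟩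
    refine hG (Set.empty_subset _) (Set.empty_subset _) ?_ hGd
    intro u hu; exact ⟨hu, hx u hu⟩
end

section
/- Cooper quantifier elimination for linear integer arithmetic (equation (3) of the paper, stated semantically): (∃ x : ℤ, F x) holds if and only if (∃ e ∈ E, F e) ∨ (∃ ℓ ∈ L, ∃ i : ℤ, 0 ≤ i ∧ i < D ∧ F (ℓ + 1 + i)) ∨ (∃ i : ℤ, 0 ≤ i ∧ i < D ∧ G ∅ ∅ ↑U {(d, w) ∈ Dv | d ∣ i + w}). The three disjunct families are the substitutions λ_m[e], λ_m[ℓ+1+i], and λ_m^{−∞}[i], respectively. -/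
private lemma dvd_shift {d D x y w : ℤ} (hd : d ∣ D) (h : D ∣ x - y) :
    d ∣ y + w → d ∣ x + w := by
  intro h'
  have h2 : d ∣ x - y := hd.trans h
  have h3 := h2.add h'
  rwa [show x - y + (y + w) = x + w by ring] at h3

/-- Cooper quantifier elimination for LIA, stated semantically. -/
theorem cooper_qe_lia
    (E L U : Finset ℤ) (Dv : Finset (ℤ × ℤ)) (D : ℤ) (hD : 0 < D)
    (hdvd : ∀ p ∈ Dv, p.1 ∣ D)
    (G : Set ℤ → Set ℤ → Set ℤ → Set (ℤ × ℤ) → Prop)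
    (hG : ∀ ⦃A A' B B' C C' : Set ℤ⦄ ⦃P P' : Set (ℤ × ℤ)⦄,
      A ⊆ A' → B ⊆ B' → C ⊆ C' → P ⊆ P' → G A B C P → G A' B' C' P')
    (F : ℤ → Prop)
    (hF : ∀ x : ℤ, F x ↔
      G {e : ℤ | e ∈ E ∧ x = e} {ℓ : ℤ | ℓ ∈ L ∧ ℓ < x} {u : ℤ | u ∈ U ∧ x < u}
        {p : ℤ × ℤ | p ∈ Dv ∧ p.1 ∣ x + p.2}) :
    (∃ x : ℤ, F x) ↔
      (∃ e ∈ E, F e) ∨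
      (∃ ℓ ∈ L, ∃ i : ℤ, 0 ≤ i ∧ i < D ∧ F (ℓ + 1 + i)) ∨
      (∃ i : ℤ, 0 ≤ i ∧ i < D ∧
        G ∅ ∅ (↑U : Set ℤ) {p : ℤ × ℤ | p ∈ Dv ∧ p.1 ∣ i + p.2}) := by
  constructor
  · rintro ⟨x, hx⟩
    have hx' := (hF x).mp hx
    by_cases hxE : x ∈ E
    · exact Or.inl ⟨x, hxE, hx⟩
    · by_cases hLx : ∃ ℓ ∈ L, ℓ < x
      · -- take the greatest lower bound below x
        refine Or.inr (Or.inl ?_)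
        have hne : (L.filter (· < x)).Nonempty := by
          obtain ⟨ℓ, hℓL, hℓx⟩ := hLx
          exact ⟨ℓ, Finset.mem_filter.mpr ⟨hℓL, hℓx⟩⟩
        set ℓ := (L.filter (· < x)).max' hne with hℓdef
        have hℓmem := (L.filter (· < x)).max'_mem hne
        rw [Finset.mem_filter] at hℓmem
        obtain ⟨hℓL, hℓx⟩ := hℓmem
        set i : ℤ := (x - ℓ - 1) % D with hidef
        have hi0 : 0 ≤ i := Int.emod_nonneg _ hD.ne'
        have hiD : i < D := Int.emod_lt_of_pos _ hD
        have hq : D * ((x - ℓ - 1) / D) + (x - ℓ - 1) % D = x - ℓ - 1 :=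
          Int.mul_ediv_add_emod _ _
        have hq0 : 0 ≤ (x - ℓ - 1) / D := Int.ediv_nonneg (by omega) hD.le
        have hile : i ≤ x - ℓ - 1 := by
          nlinarith [mul_nonneg hD.le hq0]
        have hDdvd : D ∣ x - (ℓ + 1 + i) := ⟨(x - ℓ - 1) / D, by omega⟩
        refine ⟨ℓ, hℓL, i, hi0, hiD, ?_⟩
        rw [hF]
        refine hG ?_ ?_ ?_ ?_ hx'
        · intro e he; exact (hxE (by rw [he.2]; exact he.1)).elim
        · rintro ℓ' ⟨hℓ'L, hℓ'x⟩
          have hle : ℓ' ≤ ℓ := Finset.le_max' (L.filter (· < x)) ℓ'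
            (Finset.mem_filter.mpr ⟨hℓ'L, hℓ'x⟩)
          exact ⟨hℓ'L, by omega⟩
        · rintro u ⟨huU, hxu⟩; exact ⟨huU, by omega⟩
        · rintro ⟨d, w⟩ ⟨hmem, hdv⟩
          exact ⟨hmem, dvd_shift (hdvd _ hmem) (by rw [show ℓ + 1 + i - x = -(x - (ℓ+1+i)) by ring]; exact hDdvd.neg_right) hdv⟩
      · -- no lower bounds below x
        refine Or.inr (Or.inr ?_)
        push_neg at hLx
        refine ⟨x % D, Int.emod_nonneg _ hD.ne', Int.emod_lt_of_pos _ hD, ?_⟩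
        refine hG ?_ ?_ ?_ ?_ hx'
        · intro e he; exact (hxE (by rw [he.2]; exact he.1)).elim
        · rintro ℓ' ⟨hℓ'L, hℓ'x⟩; exact absurd hℓ'x (not_lt.mpr (hLx ℓ' hℓ'L)).elim
        · rintro u ⟨huU, _⟩; exact huU
        · rintro ⟨d, w⟩ ⟨hmem, hdv⟩
          have hDdvd : D ∣ x % D - x := ⟨-(x / D), by
            have := Int.mul_ediv_add_emod x D; linarith [this, (by ring : D * -(x/D) = -(D*(x/D)))]⟩
          exact ⟨hmem, dvd_shift (hdvd _ hmem) hDdvd hdv⟩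
  · rintro (⟨e, _, he⟩ | ⟨ℓ, _, i, _, _, hFi⟩ | ⟨i, hi0, hiD, hGi⟩)
    · exact ⟨e, he⟩
    · exact ⟨ℓ + 1 + i, hFi⟩
    · -- pick a point far below all upper bounds, congruent to i mod D
      obtain ⟨b, hb⟩ : ∃ b : ℤ, ∀ u ∈ U, b < u := by
        refine ⟨(insert i U).min' ⟨i, Finset.mem_insert_self _ _⟩ - 1, fun u hu => ?_⟩
        have := Finset.min'_le (insert i U) u (Finset.mem_insert_of_mem hu)
        omega
      set k : ℤ := max (i - b) 0 with hk
      have hk0 : 0 ≤ k := le_max_right _ _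
      have hkib : i - b ≤ k := le_max_left _ _
      have hDk : k ≤ D * k := by nlinarith
      set x : ℤ := i - D * k with hxdef
      refine ⟨x, (hF x).mpr (hG ?_ ?_ ?_ ?_ hGi)⟩
      · exact Set.empty_subset _
      · exact Set.empty_subset _
      · intro u hu
        exact ⟨hu, by have := hb u hu; simp only [hxdef]; omega⟩
      · rintro ⟨d, w⟩ ⟨hmem, hdv⟩
        exact ⟨hmem, dvd_shift (hdvd _ hmem) ⟨-k, by ring⟩ hdv⟩
end

section
/- Model property of the LIA Model Based Projection LIAProj (part of Lemma 8): let x : ℤ satisfy F x. Then: (a) if x = e for some e ∈ E, then F e holds for that e; (b) otherwise, if the set {ℓ' ∈ L | ℓ' < x} of lower bounds satisfied by x is nonempty and ℓ is its maximum, then F (ℓ + 1 + ((x − (ℓ + 1)) % D)) holds; (c) otherwise, G ∅ ∅ ↑U {(d, w) ∈ Dv | d ∣ (x % D) + w} holds. That is, every model of λ_m satisfies the disjunct of Cooper's decomposition that LIAProj assigns to it, with i_ℓ = (x − (ℓ+1)) mod D and i_{−∞} = x mod D. -/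
/-- Model property of the LIA Model Based Projection: every model of the matrix
satisfies the disjunct of Cooper's decomposition that `LIAProj` assigns to it. -/
theorem lia_mbp_model_property
    (E L U : Finset ℤ) (Dv : Finset (ℤ × ℤ)) (D : ℤ) (hD : 0 < D)
    (hdvd : ∀ p ∈ Dv, p.1 ∣ D)
    (G : Set ℤ → Set ℤ → Set ℤ → Set (ℤ × ℤ) → Prop)
    (hG : ∀ ⦃A A' B B' C C' : Set ℤ⦄ ⦃P P' : Set (ℤ × ℤ)⦄,
      A ⊆ A' → B ⊆ B' → C ⊆ C' → P ⊆ P' → G A B C P → G A' B' C' P')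
    (F : ℤ → Prop)
    (hF : ∀ x : ℤ, F x ↔
      G {e : ℤ | e ∈ E ∧ x = e} {ℓ : ℤ | ℓ ∈ L ∧ ℓ < x} {u : ℤ | u ∈ U ∧ x < u}
        {p : ℤ × ℤ | p ∈ Dv ∧ p.1 ∣ x + p.2})
    (x : ℤ) (hx : F x) :
    (∀ e ∈ E, x = e → F e) ∧
    ((¬ ∃ e ∈ E, x = e) →
      ∀ ℓ : ℤ, IsGreatest {ℓ' : ℤ | ℓ' ∈ L ∧ ℓ' < x} ℓ →
        F (ℓ + 1 + (x - (ℓ + 1)) % D)) ∧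
    ((¬ ∃ e ∈ E, x = e) → {ℓ' : ℤ | ℓ' ∈ L ∧ ℓ' < x} = ∅ →
      G ∅ ∅ (↑U : Set ℤ) {p : ℤ × ℤ | p ∈ Dv ∧ p.1 ∣ x % D + p.2}) := by
  refine ⟨fun e he hxe => hxe ▸ hx, ?_, ?_⟩
  · intro hne ℓ hℓ
    obtain ⟨⟨hℓL, hℓx⟩, hub⟩ := hℓ
    set y := ℓ + 1 + (x - (ℓ + 1)) % D with hy
    have hrnn : 0 ≤ (x - (ℓ + 1)) % D := Int.emod_nonneg _ (ne_of_gt hD)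
    have hℓy : ℓ < y := by omega
    have hyx : y ≤ x := by
      have h1 : (x - (ℓ + 1)) % D ≤ x - (ℓ + 1) := by
        have h2 := Int.emod_add_mul_ediv (x - (ℓ + 1)) D
        have h3 : 0 ≤ (x - (ℓ + 1)) / D := Int.ediv_nonneg (by omega) hD.le
        nlinarith
      omega
    have hDxy : D ∣ x - y := by
      have := Int.emod_emod_of_dvd (x - (ℓ + 1)) (dvd_refl D)
      have : D ∣ (x - (ℓ + 1)) - (x - (ℓ + 1)) % D := Int.dvd_self_sub_of_emod_eq rfl
      have hxy : x - y = (x - (ℓ + 1)) - (x - (ℓ + 1)) % D := by omega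
      rw [hxy]; exact this
    rw [hF] at hx ⊢
    refine hG ?_ ?_ ?_ ?_ hx
    · rintro e ⟨heE, hxe⟩; exact absurd ⟨e, heE, hxe⟩ hne
    · rintro ℓ' ⟨hL, hlt⟩
      exact ⟨hL, lt_of_le_of_lt (hub ⟨hL, hlt⟩) hℓy⟩
    · rintro u ⟨hU, hlt⟩; exact ⟨hU, lt_of_le_of_lt hyx hlt⟩
    · rintro p ⟨hp, hdvdp⟩
      refine ⟨hp, ?_⟩
      have hpd : p.1 ∣ x - y := dvd_trans (hdvd p hp) hDxy
      have : y + p.2 = (x + p.2) - (x - y) := by ring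
      rw [this]; exact dvd_sub hdvdp hpd
  · intro hne hempty
    rw [hF] at hx
    refine hG ?_ ?_ ?_ ?_ hx
    · rintro e ⟨heE, hxe⟩; exact absurd ⟨e, heE, hxe⟩ hne
    · intro ℓ' hl; rw [hempty] at hl; exact hl.elim
    · rintro u ⟨hU, _⟩; exact hU
    · rintro p ⟨hp, hdvdp⟩
      refine ⟨hp, ?_⟩
      have hpd : p.1 ∣ x - x % D :=
        dvd_trans (hdvd p hp) (Int.dvd_self_sub_of_emod_eq rfl)
      have : x % D + p.2 = (x + p.2) - (x - x % D) := by ring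
      rw [this]; exact dvd_sub hdvdp hpd
end

section
/- Properties of the Cooper substitution point chosen by the LIA Model Based Projection: for all ℓ, x, D : ℤ with ℓ < x and D > 0, setting y := ℓ + 1 + ((x − (ℓ + 1)) % D), one has ℓ < y, y ≤ x, and D ∣ (x − y). Consequently y satisfies the same divisibility literals d ∣ · + w as x for every divisor d of D, satisfies the lower bound ℓ, and satisfies every upper-bound literal x < u that x satisfies. -/
/-- Properties of the Cooper substitution point chosen by the LIA MBP. -/
theorem cooper_substitution_point (ℓ x D : ℤ) (hℓ : ℓ < x) (hD : 0 < D) :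
    ℓ < ℓ + 1 + (x - (ℓ + 1)) % D ∧
    ℓ + 1 + (x - (ℓ + 1)) % D ≤ x ∧
    D ∣ x - (ℓ + 1 + (x - (ℓ + 1)) % D) ∧
    (∀ d w : ℤ, d ∣ D →
      (d ∣ (ℓ + 1 + (x - (ℓ + 1)) % D) + w ↔ d ∣ x + w)) ∧
    (∀ u : ℤ, x < u → ℓ + 1 + (x - (ℓ + 1)) % D < u) := by
  have hm0 : 0 ≤ (x - (ℓ + 1)) % D := Int.emod_nonneg _ (ne_of_gt hD)
  have hmle : (x - (ℓ + 1)) % D ≤ x - (ℓ + 1) := by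
    have h1 := Int.emod_add_mul_ediv (x - (ℓ + 1)) D
    have h2 : 0 ≤ (x - (ℓ + 1)) / D := Int.ediv_nonneg (by omega) (by omega)
    nlinarith
  have hdvd : D ∣ x - (ℓ + 1 + (x - (ℓ + 1)) % D) := by
    have h := Int.emod_add_mul_ediv (x - (ℓ + 1)) D
    exact ⟨(x - (ℓ + 1)) / D, by linarith⟩
  refine ⟨by omega, by omega, hdvd, ?_, by omega⟩
  intro d w hd
  have hdx : d ∣ x - (ℓ + 1 + (x - (ℓ + 1)) % D) := hd.trans hdvd
  constructor <;> intro h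
  · have h2 := dvd_add hdx h
    have e : x - (ℓ + 1 + (x - (ℓ + 1)) % D) + ((ℓ + 1 + (x - (ℓ + 1)) % D) + w)
        = x + w := by ring
    rwa [e] at h2
  · have h2 := dvd_sub h hdx
    have e : x + w - (x - (ℓ + 1 + (x - (ℓ + 1)) % D))
        = (ℓ + 1 + (x - (ℓ + 1)) % D) + w := by ring
    rwa [e] at h2
end

section
/- A concrete instance of Cooper quantifier elimination with one lower bound, one upper bound, and one divisibility literal: for all ℓ, u, w : ℤ and d : ℤ with d > 0, (∃ x : ℤ, ℓ < x ∧ x < u ∧ d ∣ x + w) if and only if (∃ i : ℤ, 0 ≤ i ∧ i < d ∧ ℓ + 1 + i < u ∧ d ∣ (ℓ + 1 + i) + w). -/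
/-- A concrete instance of Cooper quantifier elimination with one lower bound,
one upper bound and one divisibility literal. -/
theorem cooper_concrete (ℓ u w d : ℤ) (hd : 0 < d) :
    (∃ x : ℤ, ℓ < x ∧ x < u ∧ d ∣ x + w) ↔
      (∃ i : ℤ, 0 ≤ i ∧ i < d ∧ ℓ + 1 + i < u ∧ d ∣ (ℓ + 1 + i) + w) := by
  constructor
  · rintro ⟨x, hlx, hxu, hdx⟩
    refine ⟨(x - (ℓ + 1)) % d, Int.emod_nonneg _ hd.ne', Int.emod_lt_of_pos _ hd, ?_, ?_⟩
    · have h1 : (x - (ℓ + 1)) % d ≤ x - (ℓ + 1) := by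
        have ha : (0:ℤ) ≤ x - (ℓ + 1) := by omega
        have heq := Int.emod_add_mul_ediv (x - (ℓ + 1)) d
        have hq : 0 ≤ (x - (ℓ + 1)) / d := Int.ediv_nonneg ha hd.le
        nlinarith
      omega
    · have h2 : d ∣ (x - (ℓ + 1)) - (x - (ℓ + 1)) % d := Int.dvd_self_sub_of_emod_eq rfl
      have := Int.dvd_sub hdx h2
      have h3 : x + w - (x - (ℓ + 1) - (x - (ℓ + 1)) % d) = ℓ + 1 + (x - (ℓ + 1)) % d + w := by ring
      rwa [h3] at this
  · rintro ⟨i, h0, hid, hiu, hdi⟩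
    exact ⟨ℓ + 1 + i, by omega, hiu, hdi⟩
end
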